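/- If σ ∈ S_n(132), φ = σ^{σ_j} is defined, and S(T(σ)) = ⟨a_1,…,a_s⟩ is the spine structure of T(σ), then the spine structure of T(φ) is obtained from ⟨a_1,…,a_s⟩ by merging exactly two parts: there exist indices l ≠ m such that the parts of S(T(φ)) form the multiset {a_1,…,a_s} − {a_l, a_m} ∪ {a_l + a_m}. -/

import Mathlib

/-- A permutation `σ` of `{0,…,n-1}` is 132-avoiding if there are no indices
`a < b < c` with `σ a < σ c < σ b`. -/
def Avoids132 {n : ℕ} (σ : Equiv.Perm (Fin n)) : Prop :=
  ¬ ∃ a b c : Fin n, a < b ∧ b < c ∧ σ a < σ c ∧ σ c < σ b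

/-- `s` is an occurrence of the pattern `τ` in `σ`: a strictly increasing choice of
positions whose values are order-isomorphic to `τ`. -/
def IsOccurrence {k n : ℕ} (τ : Equiv.Perm (Fin k)) (σ : Equiv.Perm (Fin n))
    (s : Fin k → Fin n) : Prop :=
  StrictMono s ∧ ∀ a b : Fin k, σ (s a) < σ (s b) ↔ τ a < τ b

/-- The number of occurrences of the pattern `τ` in `σ`. -/
noncomputable def numOcc {k n : ℕ} (τ : Equiv.Perm (Fin k)) (σ : Equiv.Perm (Fin n)) : ℕ :=
  Nat.card {s : Fin k → Fin n // IsOccurrence τ σ s}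

open scoped Classical in
/-- `pop n τ` is `A_n(τ)`: the total number of occurrences of the pattern `τ`
over all 132-avoiding permutations of length `n`. -/
noncomputable def pop (n : ℕ) {k : ℕ} (τ : Equiv.Perm (Fin k)) : ℕ :=
  ∑ σ : Equiv.Perm (Fin n), if Avoids132 σ then numOcc τ σ else 0

/-- The move `σ^{σ_j}` is defined at positions `i < j`. -/
def MoveAt {n : ℕ} (σ : Equiv.Perm (Fin n)) (i j : Fin n) : Prop :=
  i < j ∧ σ i < σ j ∧ (∀ a : Fin n, a < i → σ j < σ a) ∧
    (∀ b : Fin n, i < b → b < j → σ b < σ i)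

/-- `φ = σ^{σ_j}`: the move is defined at `i < j` and `φ` is obtained from `σ` by removing
the entry at position `j` and reinserting it immediately before position `i`. -/
def IsShift {n : ℕ} (σ φ : Equiv.Perm (Fin n)) (i j : Fin n) : Prop :=
  MoveAt σ i j ∧
  (∀ t : Fin n, t < i → φ t = σ t) ∧ φ i = σ j ∧
  (∀ t : Fin n, i ≤ t → ∀ h : t < j,
    φ ⟨(t : ℕ) + 1, Nat.lt_of_le_of_lt (Nat.succ_le_of_lt (Fin.lt_def.mp h)) j.isLt⟩ = σ t) ∧
  (∀ t : Fin n, j < t → φ t = σ t)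

/-- The pattern 213 (zero-indexed one-line notation 1,0,2). -/
def p213 : Equiv.Perm (Fin 3) := Equiv.swap 0 1
/-- The pattern 231 (zero-indexed one-line notation 1,2,0). -/
def p231 : Equiv.Perm (Fin 3) := finRotate 3
/-- The pattern 312 (zero-indexed one-line notation 2,0,1). -/
def p312 : Equiv.Perm (Fin 3) := (finRotate 3)⁻¹
/-- The pattern 3241 (zero-indexed one-line notation 2,1,3,0). -/
def p3241 : Equiv.Perm (Fin 4) := ⟨![2,1,3,0], ![3,1,0,2], by decide, by decide⟩
/-- The pattern 3421 (zero-indexed one-line notation 2,3,1,0). -/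
def p3421 : Equiv.Perm (Fin 4) := ⟨![2,3,1,0], ![3,2,0,1], by decide, by decide⟩
/-- The pattern 324, order-isomorphic to 213. -/
def p324 : Equiv.Perm (Fin 3) := Equiv.swap 0 1
/-- The pattern 342, order-isomorphic to 231. -/
def p342 : Equiv.Perm (Fin 3) := finRotate 3
/-- The decreasing pattern of length 2. -/
def p21 : Equiv.Perm (Fin 2) := Equiv.swap 0 1
/-- The increasing pattern of length 2. -/
def p12 : Equiv.Perm (Fin 2) := 1
/-- The single-letter pattern. -/
def p1 : Equiv.Perm (Fin 1) := 1

/-- `Cm m = |S_m(132)|`, the number of 132-avoiding permutations of length `m`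
(the `m`-th Catalan number). -/
noncomputable def Cm (m : ℕ) : ℕ := Nat.card {σ : Equiv.Perm (Fin m) // Avoids132 σ}

/-- Fuelled construction of the binary tree of a sequence: root at the maximum entry,
left/right subtrees built recursively from the parts left/right of the maximum. -/
def toTreeAux : ℕ → List ℕ → Tree Unit
  | 0, _ => Tree.nil
  | _ + 1, [] => Tree.nil
  | fuel + 1, l =>
    let m := l.idxOf (l.foldr max 0)
    Tree.node () (toTreeAux fuel (l.take m)) (toTreeAux fuel (l.drop (m + 1)))

/-- The (unlabelled) binary tree associated to a sequence of distinct naturals. -/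
def toTree (l : List ℕ) : Tree Unit := toTreeAux l.length l

/-- The binary tree `T(σ)` associated to a permutation `σ`. -/
def treeOf {n : ℕ} (σ : Equiv.Perm (Fin n)) : Tree Unit :=
  toTree (List.ofFn fun i => (σ i : ℕ))

/-- Labelled version of `toTreeAux`, storing the value at each vertex. -/
def toTreeLAux : ℕ → List ℕ → Tree ℕ
  | 0, _ => Tree.nil
  | _ + 1, [] => Tree.nil
  | fuel + 1, l =>
    let m := l.idxOf (l.foldr max 0)
    Tree.node (l.foldr max 0) (toTreeLAux fuel (l.take m)) (toTreeLAux fuel (l.drop (m + 1)))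

/-- The labelled binary tree associated to a sequence of distinct naturals. -/
def toTreeL (l : List ℕ) : Tree ℕ := toTreeLAux l.length l

/-- The labelled binary tree `T(σ)` associated to a permutation `σ`, vertices
labelled by the values of `σ`. -/
def treeOfL {n : ℕ} (σ : Equiv.Perm (Fin n)) : Tree ℕ :=
  toTreeL (List.ofFn fun i => (σ i : ℕ))

/-- `spineAux t = (r, S)` where `r` is the number of vertices on the spine through the
root of `t` (following right children) and `S` is the multiset of sizes of all the
other spines (components after deleting all left-child edges). -/
def spineAux {α : Type*} : Tree α → ℕ × Multiset ℕ
  | BinaryTree.nil => (0, 0)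
  | BinaryTree.node _ L R =>
    let aL := spineAux L
    let aR := spineAux R
    (aR.1 + 1, (if aL.1 = 0 then aL.2 else aL.1 ::ₘ aL.2) + aR.2)

/-- The spine structure of a binary tree: the multiset of sizes of the connected
components obtained after deleting every edge joining a left child to its parent. -/
def spineStructure {α : Type*} (t : Tree α) : Multiset ℕ :=
  let a := spineAux t
  if a.1 = 0 then a.2 else a.1 ::ₘ a.2

/-- `RefinementLE b a` means `b ≤_R a` in refinement order: `a` can be obtained from `b`
by merging (nonempty) subsets of its parts. -/
def RefinementLE (b a : Multiset ℕ) : Prop :=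
  ∃ P : Multiset (Multiset ℕ), (∀ m ∈ P, m ≠ 0) ∧ P.sum = b ∧ P.map Multiset.sum = a

/-- The label of the root of a labelled tree, if any. -/
def rootLabel? : Tree ℕ → Option ℕ
  | BinaryTree.nil => none
  | BinaryTree.node v _ _ => some v

/-- `IsParent t p c`: in the labelled tree `t`, the vertex labelled `p` is the parent of
the vertex labelled `c`. -/
def IsParent : Tree ℕ → ℕ → ℕ → Prop
  | BinaryTree.nil, _, _ => False
  | BinaryTree.node v L R, p, c =>
      (p = v ∧ (rootLabel? L = some c ∨ rootLabel? R = some c)) ∨ IsParent L p c ∨ IsParent R p c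

open scoped List

/-!
Write `σ = A v B x C` in one-line notation, with `v = σ_i` and `x = σ_j`, so that
`φ = A x v B C`; every entry of `A` exceeds `x` and every entry of `B` is below `v`.
Induct on the position of the maximal entry, which labels the root of both trees. If it lies
in `A` or in `C`, the two trees share the root and one subtree, and the claim passes to the
other subtree. Otherwise the maximum is `x` and `A` is empty. Since `σ` avoids 132, every entry
of `C` lies below `v` and below `B`, so in `T(φ)` the spine headed by `v` (the left child of `x`
in `T(σ)`) is glued onto the end of the spine through `x`. As the spine through `x` may be part
of the root spine of the whole tree, the induction records the root spine apart from the others.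
-/

lemma List.foldr_max_zero_mem {l : List ℕ} (hl : l ≠ []) : l.foldr max 0 ∈ l :=
  List.maximum_mem (List.foldr_max_of_ne_nil hl).symm

lemma List.exists_mem_forall_le_of_ne_nil {l : List ℕ} (hl : l ≠ []) :
    ∃ M ∈ l, ∀ y ∈ l, y ≤ M :=
  ⟨_, List.foldr_max_zero_mem hl, fun _ hy => List.le_max_of_le hy le_rfl⟩

lemma List.Nodup.forall_lt_of_forall_le {P Q : List ℕ} {M : ℕ} (hnd : (P ++ M :: Q).Nodup)
    (hle : ∀ y ∈ P ++ M :: Q, y ≤ M) : (∀ y ∈ P, y < M) ∧ ∀ y ∈ Q, y < M := by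
  have hM : M ∉ P ++ Q := (List.nodup_cons.1 (List.nodup_middle.1 hnd)).1
  refine ⟨fun y hy => lt_of_le_of_ne (hle y (by simp [hy])) ?_,
    fun y hy => lt_of_le_of_ne (hle y (by simp [hy])) ?_⟩ <;>
  · rintro rfl
    exact hM (by simp [hy])

def List.Avoids132 (l : List ℕ) : Prop :=
  ∀ a b c, [a, b, c] <+ l → ¬(a < c ∧ c < b)

lemma List.Avoids132.sublist {l₁ l₂ : List ℕ} (h : l₂.Avoids132) (hs : l₁ <+ l₂) :
    l₁.Avoids132 :=
  fun a b c habc => h a b c (habc.trans hs)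

lemma toTreeAux_congr {f₁ f₂ : ℕ} {l : List ℕ} (h₁ : l.length ≤ f₁) (h₂ : l.length ≤ f₂) :
    toTreeAux f₁ l = toTreeAux f₂ l := by
  induction f₁ generalizing f₂ l with
  | zero => cases List.length_eq_zero_iff.1 (Nat.le_zero.1 h₁); cases f₂ <;> rfl
  | succ f ih =>
    match l, f₂ with
    | [], 0 | [], _ + 1 => rfl
    | a :: l, 0 => simp at h₂
    | a :: l, f₂ + 1 =>
      have hm := List.idxOf_lt_length_of_mem (List.foldr_max_zero_mem (List.cons_ne_nil a l))
      simp only [List.length_cons] at h₁ h₂ hm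
      simp only [toTreeAux]
      congr 1 <;> apply ih <;> simp only [List.length_take, List.length_drop, List.length_cons] <;>
        omega

lemma toTree_append_cons {P Q : List ℕ} {M : ℕ} (hP : ∀ y ∈ P, y < M) (hQ : ∀ y ∈ Q, y < M) :
    toTree (P ++ M :: Q) = .node () (toTree P) (toTree Q) := by
  have hmax : (P ++ M :: Q).foldr max 0 = M := by
    refine le_antisymm (List.max_le_of_forall_le _ _ fun y hy => ?_)
      (List.le_max_of_le (by simp) le_rfl)
    simp only [List.mem_append, List.mem_cons] at hy
    rcases hy with hy | rfl | hy
    exacts [(hP y hy).le, le_rfl, (hQ y hy).le]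
  have hidx : (P ++ M :: Q).idxOf M = P.length := by
    rw [List.idxOf_append_of_notMem fun hM => (hP M hM).false, List.idxOf_cons_self, add_zero]
  have hdrop : (P ++ M :: Q).drop (P.length + 1) = Q := by simp
  rw [toTree, show (P ++ M :: Q).length = P.length + Q.length + 1 by simp [Nat.add_assoc],
    toTreeAux, hmax, hidx, List.take_left, hdrop]
  · congr 1 <;> exact toTreeAux_congr (by omega) le_rfl
  · simp

lemma toTree_append_cons_of_le {P Q : List ℕ} {M : ℕ} (hnd : (P ++ M :: Q).Nodup)
    (hle : ∀ y ∈ P ++ M :: Q, y ≤ M) : toTree (P ++ M :: Q) = .node () (toTree P) (toTree Q) :=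
  toTree_append_cons (hnd.forall_lt_of_forall_le hle).1 (hnd.forall_lt_of_forall_le hle).2

lemma toTree_cons {M : ℕ} {Q : List ℕ} (hQ : ∀ y ∈ Q, y < M) :
    toTree (M :: Q) = .node () .nil (toTree Q) :=
  toTree_append_cons (P := []) (by simp) hQ

lemma spineAux_node {α : Type*} (u : α) (L R : BinaryTree α) :
    spineAux (.node u L R) = ((spineAux R).1 + 1, spineStructure L + (spineAux R).2) :=
  rfl

lemma spineStructure_nil {α : Type*} : spineStructure (.nil : BinaryTree α) = 0 :=
  rfl

lemma spineStructure_node {α : Type*} (u : α) (L R : BinaryTree α) :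
    spineStructure (.node u L R) = ((spineAux R).1 + 1) ::ₘ (spineStructure L + (spineAux R).2) :=
  rfl

lemma spineAux_toTree_fst_ne_zero {l : List ℕ} (hl : l ≠ []) : (spineAux (toTree l)).1 ≠ 0 := by
  cases l with
  | nil => contradiction
  | cons a l => simp [toTree, toTreeAux, spineAux]

/-- The tree of `B ++ C` is that of `B` with the tree of `C` hung below the end of its root
spine. -/
lemma spineAux_toTree_append {B C : List ℕ} (hB : B.Nodup) (hBC : ∀ b ∈ B, ∀ c ∈ C, c < b) :
    spineAux (toTree (B ++ C)) = ((spineAux (toTree B)).1 + (spineAux (toTree C)).1,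
      (spineAux (toTree B)).2 + (spineAux (toTree C)).2) := by
  induction hk : B.length using Nat.strong_induction_on generalizing B with
  | _ k ih =>
  rcases eq_or_ne B [] with rfl | hne
  · simp [toTree, toTreeAux, spineAux]
  obtain ⟨M, hM, hle⟩ := List.exists_mem_forall_le_of_ne_nil hne
  obtain ⟨P, Q, rfl⟩ := List.append_of_mem hM
  obtain ⟨hP, hQ⟩ := hB.forall_lt_of_forall_le hle
  have hQC : ∀ y ∈ Q ++ C, y < M := by
    simp only [List.mem_append]
    rintro y (hy | hy)
    exacts [hQ y hy, hBC M hM y hy]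
  have hQnd : Q.Nodup := (hB.sublist (List.sublist_append_right P _)).of_cons
  rw [List.append_assoc, List.cons_append, toTree_append_cons hP hQC, toTree_append_cons hP hQ,
    spineAux_node, spineAux_node,
    ih Q.length (by simp [← hk]; omega) hQnd (fun b hb => hBC b (by simp [hb])) rfl]
  ext <;> simp only [add_assoc, add_comm 1]

def MergesTwo (X Y : Multiset ℕ) : Prop :=
  ∃ a b S, X = a ::ₘ b ::ₘ S ∧ Y = (a + b) ::ₘ S

lemma MergesTwo.add_left {X Y : Multiset ℕ} (h : MergesTwo X Y) (Z : Multiset ℕ) :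
    MergesTwo (Z + X) (Z + Y) := by
  obtain ⟨a, b, S, rfl, rfl⟩ := h
  exact ⟨a, b, Z + S, by simp only [Multiset.add_cons], by rw [Multiset.add_cons]⟩

lemma MergesTwo.add_right {X Y : Multiset ℕ} (h : MergesTwo X Y) (Z : Multiset ℕ) :
    MergesTwo (X + Z) (Y + Z) := by
  simpa only [add_comm _ Z] using h.add_left Z

/-- Merging two spines of a tree, on the pairs `(root spine, other spines)` computed by
`spineAux`: either the root spine is untouched, or it is one of the two merged spines. -/
def SpineMerge (p q : ℕ × Multiset ℕ) : Prop :=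
  (q.1 = p.1 ∧ MergesTwo p.2 q.2) ∨ ∃ a, p.2 = a ::ₘ q.2 ∧ q.1 = p.1 + a

lemma SpineMerge.mergesTwo_cons {p q : ℕ × Multiset ℕ} (h : SpineMerge p q) :
    MergesTwo (p.1 ::ₘ p.2) (q.1 ::ₘ q.2) := by
  rcases h with ⟨h₁, h₂⟩ | ⟨a, h₂, h₁⟩
  · simpa only [h₁, ← Multiset.singleton_add] using h₂.add_left {p.1}
  · exact ⟨p.1, a, q.2, by rw [h₂], by rw [h₁]⟩

lemma SpineMerge.mergesTwo_spineStructure {α : Type*} {t t' : BinaryTree α}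
    (ht : (spineAux t).1 ≠ 0) (h : SpineMerge (spineAux t) (spineAux t')) :
    MergesTwo (spineStructure t) (spineStructure t') := by
  have ht' : (spineAux t').1 ≠ 0 := by rcases h with ⟨h₁, -⟩ | ⟨a, -, h₁⟩ <;> omega
  simpa only [spineStructure, if_neg ht, if_neg ht'] using h.mergesTwo_cons

lemma SpineMerge.node_right {α : Type*} {R R' : BinaryTree α}
    (h : SpineMerge (spineAux R) (spineAux R')) (u : α) (L : BinaryTree α) :
    SpineMerge (spineAux (.node u L R)) (spineAux (.node u L R')) := by
  rw [spineAux_node, spineAux_node]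
  rcases h with ⟨h₁, h₂⟩ | ⟨a, h₂, h₁⟩
  · exact .inl ⟨by rw [h₁], h₂.add_left _⟩
  · exact .inr ⟨a, by simp only [h₂, Multiset.add_cons], by simp only [h₁]; omega⟩

lemma MergesTwo.spineMerge_node_left {α : Type*} {L L' : BinaryTree α}
    (h : MergesTwo (spineStructure L) (spineStructure L')) (u : α) (R : BinaryTree α) :
    SpineMerge (spineAux (.node u L R)) (spineAux (.node u L' R)) := by
  rw [spineAux_node, spineAux_node]
  exact .inl ⟨rfl, h.add_right _⟩

lemma spineMerge_toTree_shift_of_forall_le {v x : ℕ} {B C : List ℕ}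
    (hnd : (v :: (B ++ x :: C)).Nodup) (hav : (v :: (B ++ x :: C)).Avoids132)
    (hB : ∀ b ∈ B, b < v) (hle : ∀ y ∈ v :: (B ++ x :: C), y ≤ x) :
    SpineMerge (spineAux (toTree (v :: (B ++ x :: C))))
      (spineAux (toTree (x :: v :: (B ++ C)))) := by
  rw [← List.cons_append] at hnd hav hle
  obtain ⟨hvB, hC⟩ := hnd.forall_lt_of_forall_le hle
  have hvBC : ∀ y ∈ v :: B, ∀ c ∈ C, c < y := by
    intro y hy c hc
    have hsub : [y, x, c] <+ v :: B ++ x :: C :=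
      (List.singleton_sublist.2 hy).append ((List.singleton_sublist.2 hc).cons_cons x)
    have hcy : c ≠ y := fun hcy => List.disjoint_of_nodup_append hnd hy (by simp [hcy ▸ hc])
    have := hav y x c hsub
    have := hC c hc
    omega
  have hvBC_lt : ∀ y ∈ v :: (B ++ C), y < x := by
    rw [← List.cons_append]
    simp only [List.mem_append]
    rintro y (hy | hy)
    exacts [hvB y hy, hC y hy]
  rw [← List.cons_append, toTree_append_cons hvB hC, toTree_cons hvBC_lt, spineAux_node,
    spineAux_node, ← List.cons_append,
    spineAux_toTree_append (hnd.sublist (List.sublist_append_left _ _)) hvBC, toTree_cons hB,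
    spineAux_node]
  refine .inr ⟨(spineAux (toTree B)).1 + 1, ?_, ?_⟩
  · simp only [spineStructure_node, spineStructure_nil, zero_add, Multiset.cons_add]
  · simp only
    omega

theorem spineMerge_toTree_shift {A B C : List ℕ} {v x : ℕ} (hnd : (A ++ v :: (B ++ x :: C)).Nodup)
    (hav : (A ++ v :: (B ++ x :: C)).Avoids132) (hA : ∀ a ∈ A, x < a) (hB : ∀ b ∈ B, b < v)
    (hvx : v < x) :
    SpineMerge (spineAux (toTree (A ++ v :: (B ++ x :: C))))
      (spineAux (toTree (A ++ x :: v :: (B ++ C)))) := by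
  induction hk : A.length + C.length using Nat.strong_induction_on generalizing A C with
  | _ k ih =>
  obtain ⟨M, hM, hle⟩ := List.exists_mem_forall_le_of_ne_nil (l := A ++ v :: (B ++ x :: C))
    (by simp)
  have hperm : (A ++ x :: v :: (B ++ C)).Perm (A ++ v :: (B ++ x :: C)) :=
    (List.perm_middle (l₁ := v :: B)).symm.append_left A
  have hnd' := hperm.nodup_iff.2 hnd
  have hle' : ∀ y ∈ A ++ x :: v :: (B ++ C), y ≤ M := fun y hy => hle y (hperm.subset hy)
  simp only [List.mem_append, List.mem_cons] at hM
  rcases hM with hMA | hMv | hMB | hMx | hMC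
  · obtain ⟨s, t, rfl⟩ := List.append_of_mem hMA
    simp only [List.append_assoc, List.cons_append] at hnd hnd' hle hle' hav ⊢
    rw [toTree_append_cons_of_le hnd hle, toTree_append_cons_of_le hnd' hle']
    refine SpineMerge.node_right ?_ _ _
    have hsub : t ++ v :: (B ++ x :: C) <+ s ++ M :: (t ++ v :: (B ++ x :: C)) :=
      (List.sublist_cons_self M _).trans (List.sublist_append_right s _)
    exact ih (t.length + C.length) (by simp [← hk]; omega) (hnd.sublist hsub) (hav.sublist hsub)
      (fun a ha => hA a (by simp [ha])) rfl
  · exact absurd (hle x (by simp)) (hMv ▸ hvx.not_ge)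
  · exact absurd (hle x (by simp)) (hvx.trans' (hB _ hMB)).not_ge
  · subst M
    obtain rfl : A = [] :=
      List.eq_nil_iff_forall_not_mem.2 fun a ha => (hA a ha).not_ge (hle a (by simp [ha]))
    exact spineMerge_toTree_shift_of_forall_le hnd hav hB hle
  · obtain ⟨s, t, rfl⟩ := List.append_of_mem hMC
    rw [show A ++ v :: (B ++ x :: (s ++ M :: t)) = (A ++ v :: (B ++ x :: s)) ++ M :: t by simp]
      at hnd hle hav ⊢
    rw [show A ++ x :: v :: (B ++ (s ++ M :: t)) = (A ++ x :: v :: (B ++ s)) ++ M :: t by simp]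
      at hnd' hle' ⊢
    rw [toTree_append_cons_of_le hnd hle, toTree_append_cons_of_le hnd' hle']
    have hsub : A ++ v :: (B ++ x :: s) <+ (A ++ v :: (B ++ x :: s)) ++ M :: t :=
      List.sublist_append_left _ _
    refine MergesTwo.spineMerge_node_left ?_ _ _
    exact (ih (A.length + s.length) (by simp [← hk]) (hnd.sublist hsub) (hav.sublist hsub) hA
      rfl).mergesTwo_spineStructure (spineAux_toTree_fst_ne_zero (by simp))

lemma IsShift.exists_ofFn_eq {n : ℕ} {σ φ : Equiv.Perm (Fin n)} {i j : Fin n}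
    (h : IsShift σ φ i j) :
    ∃ A B C : List ℕ, List.ofFn (fun t => (σ t : ℕ)) = A ++ (σ i : ℕ) :: (B ++ (σ j : ℕ) :: C) ∧
      List.ofFn (fun t => (φ t : ℕ)) = A ++ (σ j : ℕ) :: (σ i : ℕ) :: (B ++ C) ∧
      (∀ a ∈ A, (σ j : ℕ) < a) ∧ ∀ b ∈ B, b < (σ i : ℕ) := by
  obtain ⟨⟨hij, -, hA, hB⟩, hpre, hmid, hseg, hpost⟩ := h
  rw [Fin.lt_def] at hij
  refine ⟨List.ofFn fun t : Fin i => (σ ⟨t, by omega⟩ : ℕ),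
    List.ofFn fun t : Fin (j - i - 1) => (σ ⟨i + 1 + t, by omega⟩ : ℕ),
    List.ofFn fun t : Fin (n - j - 1) => (σ ⟨j + 1 + t, by omega⟩ : ℕ), ?_, ?_, ?_, ?_⟩
  · refine List.ext_getElem (by simp; omega) fun p hp _ => ?_
    simp only [List.length_ofFn] at hp
    simp only [List.getElem_ofFn, List.getElem_append, List.getElem_cons, List.length_ofFn]
    split_ifs <;> congr 3 <;> omega
  · refine List.ext_getElem (by simp; omega) fun p hp _ => ?_
    simp only [List.length_ofFn] at hp
    simp only [List.getElem_ofFn, List.getElem_append, List.getElem_cons, List.length_ofFn]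
    split_ifs
    · rw [hpre _ (Fin.lt_def.2 ‹_›)]
    · rw [show (⟨p, hp⟩ : Fin n) = i from Fin.ext (by dsimp only; omega), hmid]
    · rw [show (⟨p, hp⟩ : Fin n) = ⟨i + 1, by omega⟩ from Fin.ext (by simp; omega),
        hseg i le_rfl (Fin.lt_def.2 hij)]
    · rw [show (⟨p, hp⟩ : Fin n) = ⟨(p - 1 : ℕ) + 1, by omega⟩ from Fin.ext (by simp; omega),
        hseg ⟨p - 1, by omega⟩ (Fin.le_def.2 (by simp; omega)) (Fin.lt_def.2 (by simp; omega))]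
      congr 3
      omega
    · rw [hpost _ (Fin.lt_def.2 (by dsimp only; omega))]
      congr 3
      omega
  · simp only [List.mem_ofFn, forall_exists_index]
    rintro _ t rfl
    exact hA _ (Fin.lt_def.2 t.isLt)
  · simp only [List.mem_ofFn, forall_exists_index]
    rintro _ t rfl
    exact hB _ (Fin.lt_def.2 (by simp; omega)) (Fin.lt_def.2 (by simp; omega))

lemma Avoids132.ofFn {n : ℕ} {σ : Equiv.Perm (Fin n)} (hσ : Avoids132 σ) :
    (List.ofFn fun t => (σ t : ℕ)).Avoids132 := by
  rintro a b c hsub ⟨hac, hcb⟩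
  obtain ⟨e, he⟩ := List.sublist_iff_exists_fin_orderEmbedding_get_eq.1 hsub
  let pos (k : Fin 3) : Fin n := Fin.cast (List.length_ofFn) (e k)
  have hpos : ∀ k, (σ (pos k) : ℕ) = [a, b, c].get k := fun k => by rw [he k, List.get_ofFn]
  refine hσ ⟨pos 0, pos 1, pos 2, e.strictMono (show (0 : Fin 3) < 1 by decide),
    e.strictMono (show (1 : Fin 3) < 2 by decide), ?_, ?_⟩
  · rw [Fin.lt_def, hpos, hpos]; exact hac
  · rw [Fin.lt_def, hpos, hpos]; exact hcb

/-- the spine structure of `T(σ^{σ_j})` is obtained from that of `T(σ)`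
by merging exactly two parts. -/
theorem spine_merge {n : ℕ} (σ φ : Equiv.Perm (Fin n)) (i j : Fin n)
    (hσ : Avoids132 σ) (h : IsShift σ φ i j) :
    ∃ (S : Multiset ℕ) (a b : ℕ),
      spineStructure (treeOf σ) = a ::ₘ b ::ₘ S ∧
      spineStructure (treeOf φ) = (a + b) ::ₘ S := by
  obtain ⟨A, B, C, hσl, hφl, hA, hB⟩ := h.exists_ofFn_eq
  have hnd : (A ++ (σ i : ℕ) :: (B ++ (σ j : ℕ) :: C)).Nodup :=
    hσl ▸ List.nodup_ofFn.2 (Fin.val_injective.comp σ.injective)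
  have hvx : σ i < σ j := h.1.2.1
  have hmerge := spineMerge_toTree_shift hnd (hσl ▸ hσ.ofFn) hA hB hvx
  obtain ⟨a, b, S, hσS, hφS⟩ :=
    hmerge.mergesTwo_spineStructure (spineAux_toTree_fst_ne_zero (by simp))
  exact ⟨S, a, b, by rw [treeOf, hσl, hσS], by rw [treeOf, hφl, hφS]⟩
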